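/- arXiv:2409.10860 — 2 statements merged into one kernel-verified Lean document; each statement's English description precedes it below -/
import Mathlib

section
/- Let L ∈ ℝ^{d×d} be symmetric positive semidefinite with rank r < d, let α ∈ ℝ^{d×(d-r)} have orthonormal columns spanning the kernel of L, and let α_⊥ ∈ ℝ^{d×r} have orthonormal columns spanning the column space of L. Then (L + αα')^{-1} L x = α_⊥(α_⊥' L α_⊥)^{-1} α_⊥' L x for every x ∈ ℝ^d. -/
/-!
Completing `α` by `αp` to an orthogonal matrix gives `α αᵀ + αp αpᵀ = 1`. Since `L α = 0` and
`L` is symmetric, `L = αp M αpᵀ` with `M = αpᵀ L αp`, and `M` is invertible because it has the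
rank `r` of `L`. In the orthonormal frame `(αp, α)` the matrix `L + α αᵀ` is block diagonal with
blocks `M` and `1`, so `(L + α αᵀ)⁻¹ = αp M⁻¹ αpᵀ + α αᵀ`; the second summand is killed by `L`.
-/

open Matrix

namespace Matrix

theorem isUnit_of_rank_eq_card {K n : Type*} [Field K] [Fintype n] [DecidableEq n]
    {A : Matrix n n K} (h : A.rank = Fintype.card n) : IsUnit A := by
  rw [← mulVec_surjective_iff_isUnit]
  change Function.Surjective A.mulVecLin
  rw [← LinearMap.range_eq_top]
  apply Submodule.eq_top_of_finrank_eq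
  rw [Module.finrank_fintype_fun_eq_card, ← h]
  rfl

section OrthonormalComplement

variable {R n m k : Type*} [CommRing R] [Fintype n] [Fintype m] [Fintype k] [DecidableEq n]
  {A : Matrix n m R} {B : Matrix n k R} {L : Matrix n n R}

theorem mul_transpose_add_mul_transpose_eq_one [DecidableEq m] [DecidableEq k]
    (hcard : Fintype.card m + Fintype.card k = Fintype.card n)
    (hA : Aᵀ * A = 1) (hB : Bᵀ * B = 1) (hAB : Aᵀ * B = 0) :
    A * Aᵀ + B * Bᵀ = 1 := by
  have hBA : Bᵀ * A = 0 := by rw [← transpose_transpose A, ← transpose_mul, hAB, transpose_zero]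
  have e : n ≃ m ⊕ k := Fintype.equivOfCardEq (by rw [Fintype.card_sum, hcard])
  have h := (fromCols_mul_fromRows_eq_one_comm e A B Aᵀ Bᵀ).mpr <| by
    rw [fromRows_mul_fromCols, hA, hB, hAB, hBA, fromBlocks_one]
  rwa [fromCols_mul_fromRows] at h

variable (hsum : A * Aᵀ + B * Bᵀ = 1) (hLA : L * A = 0) (hAL : Aᵀ * L = 0)
include hsum hLA hAL

theorem mul_transpose_mul_mul_mul_transpose_eq :
    B * (Bᵀ * L * B) * Bᵀ = L := by
  have hBB : B * Bᵀ = 1 - A * Aᵀ := eq_sub_of_add_eq' hsum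
  calc B * (Bᵀ * L * B) * Bᵀ = (B * Bᵀ) * L * (B * Bᵀ) := by simp only [Matrix.mul_assoc]
    _ = L := by
      rw [hBB, sub_mul, Matrix.mul_assoc A, hAL, Matrix.mul_zero, sub_zero, Matrix.one_mul,
        mul_sub, ← Matrix.mul_assoc L, hLA, Matrix.zero_mul, sub_zero, Matrix.mul_one]

theorem inv_add_mul_transpose [DecidableEq m] [DecidableEq k]
    (hB : Bᵀ * B = 1) (hAB : Aᵀ * B = 0) (hA : Aᵀ * A = 1) (hM : IsUnit (Bᵀ * L * B).det) :
    (L + A * Aᵀ)⁻¹ = B * (Bᵀ * L * B)⁻¹ * Bᵀ + A * Aᵀ := by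
  set M := Bᵀ * L * B
  have hLB : L * B = B * M := by
    calc L * B = B * M * (Bᵀ * B) := by
          rw [← Matrix.mul_assoc, mul_transpose_mul_mul_mul_transpose_eq hsum hLA hAL]
      _ = B * M := by rw [hB, Matrix.mul_one]
  refine inv_eq_right_inv ?_
  calc (L + A * Aᵀ) * (B * M⁻¹ * Bᵀ + A * Aᵀ)
      = (L * B) * M⁻¹ * Bᵀ + (L * A) * Aᵀ + A * (Aᵀ * B) * M⁻¹ * Bᵀ + A * (Aᵀ * A) * Aᵀ := by
        simp only [add_mul, mul_add, Matrix.mul_assoc]; abel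
    _ = B * (M * M⁻¹) * Bᵀ + A * Aᵀ := by
        rw [hLB, hLA, hAB, hA]
        simp only [Matrix.mul_zero, Matrix.zero_mul, add_zero, Matrix.mul_one, Matrix.mul_assoc]
    _ = 1 := by rw [mul_nonsing_inv M hM, Matrix.mul_one, add_comm, hsum]

end OrthonormalComplement

end Matrix

theorem stmt4_general {d r : ℕ}
    (L : Matrix (Fin d) (Fin d) ℝ)
    (hLsym : Lᵀ = L) (hLrank : L.rank = r)
    (α : Matrix (Fin d) (Fin (d - r)) ℝ)
    (hαon : αᵀ * α = 1) (hαker : L * α = 0)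
    (αp : Matrix (Fin d) (Fin r) ℝ)
    (hαpon : αpᵀ * αp = 1) (hαpcol : αᵀ * αp = 0) :
    ∀ x : Fin d → ℝ,
      (L + α * αᵀ)⁻¹ *ᵥ (L *ᵥ x) =
        αp *ᵥ ((αpᵀ * L * αp)⁻¹ *ᵥ (αpᵀ *ᵥ (L *ᵥ x))) := by
  have hαL : αᵀ * L = 0 := by rw [← hLsym, ← transpose_mul, hαker, transpose_zero]
  have hrd : r ≤ d := hLrank ▸ L.rank_le_width
  have hsum : α * αᵀ + αp * αpᵀ = 1 :=
    mul_transpose_add_mul_transpose_eq_one (by simp [Nat.sub_add_cancel hrd]) hαon hαpon hαpcol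
  have hfac := mul_transpose_mul_mul_mul_transpose_eq hsum hαker hαL
  have hMrank : (αpᵀ * L * αp).rank = Fintype.card (Fin r) := by
    refine le_antisymm (rank_le_card_width _) ?_
    calc Fintype.card (Fin r) = (αp * (αpᵀ * L * αp) * αpᵀ).rank := by simp [hfac, hLrank]
      _ ≤ _ := (rank_mul_le_left _ _).trans (rank_mul_le_right _ _)
  have hMdet := (isUnit_iff_isUnit_det _).mp (isUnit_of_rank_eq_card hMrank)
  intro x
  rw [mulVec_mulVec, inv_add_mul_transpose hsum hαker hαL hαpon hαpcol hαon hMdet, add_mul,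
    Matrix.mul_assoc α, hαL, Matrix.mul_zero, add_zero]
  simp only [mulVec_mulVec, Matrix.mul_assoc]

theorem stmt4 {d r : ℕ} (hrd : r < d)
    (L : Matrix (Fin d) (Fin d) ℝ)
    (hLsym : Lᵀ = L) (hLpsd : L.PosSemidef) (hLrank : L.rank = r)
    (α : Matrix (Fin d) (Fin (d - r)) ℝ)
    (hαon : αᵀ * α = 1) (hαker : L * α = 0)
    (αp : Matrix (Fin d) (Fin r) ℝ)
    (hαpon : αpᵀ * αp = 1) (hαpcol : αᵀ * αp = 0) :
    ∀ x : Fin d → ℝ,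
      (L + α * αᵀ)⁻¹ *ᵥ (L *ᵥ x) =
        αp *ᵥ ((αpᵀ * L * αp)⁻¹ *ᵥ (αpᵀ *ᵥ (L *ᵥ x))) :=
  stmt4_general L hLsym hLrank α hαon hαker αp hαpon hαpcol
end

section
/- Let β, β̂ ∈ ℝ^{d×r} with β'β = β̂'β̂ = I_r. Suppose β_⊥'(β̂ − β) = E₁ and (β̂ − β)'β + β'(β̂ − β) = E₂, where β_⊥ ∈ ℝ^{d×(d-r)} satisfies β'β_⊥ = 0, β_⊥'β_⊥ = I_{d-r}. Then β̂β̂' − ββ' = β E₁' β_⊥' + β_⊥ E₁ β' + R, where the remainder R satisfies ‖R‖_F ≤ ‖β̂ − β‖_F² + ‖E₂‖_F (in particular, if E₁, E₂, and ‖β̂−β‖² are O(1/T), then ββ'-projection error β̂β̂' − ββ' is O(1/T)). -/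
/-!
Write `Δ = β̂ - β`. Since `β` and `β_⊥` together form an orthogonal matrix, `β_⊥ β_⊥' = 1 - ββ'`,
so the first-order term `β E₁' β_⊥' + β_⊥ E₁ β'` equals `βΔ' + Δβ' - β E₂ β'`. Expanding
`β̂β̂' = (β + Δ)(β + Δ)'` the remainder is therefore exactly `R = ΔΔ' + β E₂ β'`. The Frobenius norm
is submultiplicative and invariant under `M ↦ β M β'` because `β` has orthonormal columns.
-/

open Matrix

/-- The Frobenius norm of a real matrix. -/
noncomputable def fnorm {m n : Type*} [Fintype m] [Fintype n]
    (M : Matrix m n ℝ) : ℝ :=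
  Real.sqrt (∑ i, ∑ j, (M i j) ^ 2)

attribute [local instance] Matrix.frobeniusSeminormedAddCommGroup

theorem fnorm_eq_norm {m n : Type*} [Fintype m] [Fintype n] (M : Matrix m n ℝ) :
    fnorm M = ‖M‖ := by
  rw [frobenius_norm_def, fnorm, Real.sqrt_eq_rpow]
  simp only [Real.norm_eq_abs, sq_abs, Real.rpow_two]

namespace Matrix

variable {R m n p : Type*} [Fintype m] [Fintype n] [Fintype p]

theorem card_le_card_of_mul_eq_one [CommRing R] [StrongRankCondition R] [DecidableEq m]
    {A : Matrix m n R} {B : Matrix n m R} (h : A * B = 1) :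
    Fintype.card m ≤ Fintype.card n := by
  calc Fintype.card m = (A * B).rank := by rw [h, rank_one]
    _ ≤ A.rank := rank_mul_le_left A B
    _ ≤ Fintype.card n := rank_le_card_width A

theorem mul_transpose_add_mul_transpose_eq_one_s6 [CommRing R]
    [DecidableEq m] [DecidableEq n] [DecidableEq p] (e : m ≃ n ⊕ p)
    {U : Matrix m n R} {V : Matrix m p R}
    (hU : Uᵀ * U = 1) (hUV : Uᵀ * V = 0) (hV : Vᵀ * V = 1) :
    U * Uᵀ + V * Vᵀ = 1 := by
  have hVU : Vᵀ * U = 0 := by simpa using congrArg transpose hUV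
  have hQ : (fromCols U V)ᵀ * fromCols U V = 1 := by
    rw [transpose_fromCols, fromRows_mul_fromCols, hU, hUV, hVU, hV, fromBlocks_one]
  simpa [transpose_fromCols, fromCols_mul_fromRows] using (mul_eq_one_comm_of_equiv e.symm).mp hQ

theorem mul_transpose_sub_mul_transpose_sub_linear_eq [CommRing R] [DecidableEq m]
    {U Uh : Matrix m n R} {V : Matrix m p R} (hP : U * Uᵀ + V * Vᵀ = 1) :
    Uh * Uhᵀ - U * Uᵀ - (U * (Vᵀ * (Uh - U))ᵀ * Vᵀ + V * (Vᵀ * (Uh - U)) * Uᵀ) =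
      (Uh - U) * (Uh - U)ᵀ + U * ((Uh - U)ᵀ * U + Uᵀ * (Uh - U)) * Uᵀ := by
  set Δ := Uh - U
  have hV : V * Vᵀ = 1 - U * Uᵀ := eq_sub_of_add_eq' hP
  have hUh : Uh = U + Δ := (add_sub_cancel U Uh).symm
  have h₁ : U * (Vᵀ * Δ)ᵀ * Vᵀ = U * Δᵀ - U * (Δᵀ * U) * Uᵀ := by
    rw [transpose_mul, transpose_transpose, Matrix.mul_assoc, Matrix.mul_assoc, hV,
      Matrix.mul_sub, Matrix.mul_one]
    simp only [Matrix.mul_sub, Matrix.mul_assoc]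
  have h₂ : V * (Vᵀ * Δ) * Uᵀ = Δ * Uᵀ - U * (Uᵀ * Δ) * Uᵀ := by
    rw [← Matrix.mul_assoc, hV, Matrix.sub_mul, Matrix.one_mul]
    simp only [Matrix.sub_mul, Matrix.mul_assoc]
  rw [h₁, h₂, hUh]
  simp only [transpose_add, Matrix.add_mul, Matrix.mul_add, Matrix.mul_assoc]
  abel

theorem frobenius_norm_sq_eq_trace (A : Matrix m n ℝ) : ‖A‖ ^ 2 = (Aᵀ * A).trace := by
  rw [frobenius_norm_def, ← Real.sqrt_eq_rpow, Real.sq_sqrt (by positivity), trace,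
    Finset.sum_comm]
  simp [mul_apply, sq]

theorem frobenius_norm_mul_mul_transpose [DecidableEq n] {U : Matrix m n ℝ} (hU : Uᵀ * U = 1)
    (M : Matrix n n ℝ) : ‖U * M * Uᵀ‖ = ‖M‖ := by
  have hsq : (U * M * Uᵀ)ᵀ * (U * M * Uᵀ) = U * (Mᵀ * M) * Uᵀ := by
    simp only [transpose_mul, transpose_transpose, Matrix.mul_assoc]
    rw [← Matrix.mul_assoc Uᵀ U, hU, Matrix.one_mul]
  refine (pow_left_inj₀ (norm_nonneg _) (norm_nonneg _) two_ne_zero).mp ?_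
  rw [frobenius_norm_sq_eq_trace, frobenius_norm_sq_eq_trace, hsq, trace_mul_comm,
    ← Matrix.mul_assoc, hU, Matrix.one_mul]

theorem frobenius_norm_mul_transpose_self_le (A : Matrix m n ℝ) : ‖A * Aᵀ‖ ≤ ‖A‖ ^ 2 := by
  simpa [frobenius_norm_transpose, sq] using frobenius_norm_mul A Aᵀ

end Matrix

theorem stmt6_general {d r : ℕ} (β βh : Matrix (Fin d) (Fin r) ℝ)
    (hβ : βᵀ * β = 1)
    (βp : Matrix (Fin d) (Fin (d - r)) ℝ)
    (hβp₁ : βᵀ * βp = 0) (hβp₂ : βpᵀ * βp = 1)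
    (E₁ : Matrix (Fin (d - r)) (Fin r) ℝ) (E₂ : Matrix (Fin r) (Fin r) ℝ)
    (hE₁ : βpᵀ * (βh - β) = E₁)
    (hE₂ : (βh - β)ᵀ * β + βᵀ * (βh - β) = E₂) :
    fnorm (βh * βhᵀ - β * βᵀ - (β * E₁ᵀ * βpᵀ + βp * E₁ * βᵀ)) ≤
      (fnorm (βh - β)) ^ 2 + fnorm E₂ := by
  subst hE₁ hE₂
  have hrd : r ≤ d := by simpa using card_le_card_of_mul_eq_one hβ
  have hP : β * βᵀ + βp * βpᵀ = 1 :=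
    mul_transpose_add_mul_transpose_eq_one_s6 ((finCongr (by omega)).trans finSumFinEquiv.symm)
      hβ hβp₁ hβp₂
  simp only [fnorm_eq_norm, mul_transpose_sub_mul_transpose_sub_linear_eq hP]
  calc _ ≤ ‖(βh - β) * (βh - β)ᵀ‖ + ‖β * ((βh - β)ᵀ * β + βᵀ * (βh - β)) * βᵀ‖ := norm_add_le ..
    _ ≤ _ := add_le_add (frobenius_norm_mul_transpose_self_le _)
      (frobenius_norm_mul_mul_transpose hβ _).le

theorem stmt6 {d r : ℕ} (β βh : Matrix (Fin d) (Fin r) ℝ)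
    (hβ : βᵀ * β = 1) (hβh : βhᵀ * βh = 1)
    (βp : Matrix (Fin d) (Fin (d - r)) ℝ)
    (hβp₁ : βᵀ * βp = 0) (hβp₂ : βpᵀ * βp = 1)
    (E₁ : Matrix (Fin (d - r)) (Fin r) ℝ) (E₂ : Matrix (Fin r) (Fin r) ℝ)
    (hE₁ : βpᵀ * (βh - β) = E₁)
    (hE₂ : (βh - β)ᵀ * β + βᵀ * (βh - β) = E₂) :
    fnorm (βh * βhᵀ - β * βᵀ - (β * E₁ᵀ * βpᵀ + βp * E₁ * βᵀ)) ≤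
      (fnorm (βh - β)) ^ 2 + fnorm E₂ :=
  stmt6_general β βh hβ βp hβp₁ hβp₂ E₁ E₂ hE₁ hE₂
end
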